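/- The state |ψ₁⟩ = (1/√6)(|↑↑0⟩ + |↓↓0⟩ + |↓0↓⟩ + |↑0↑⟩ + |0↓↓⟩ + |0↑↑⟩) in (ℂ³)^{⊗3} has all three single-mode reduced density matrices equal to (1/3)·I₃. -/
import Mathlib


open Finset

/-- Reduced density matrix of mode A (trace out B and C). -/
noncomputable def rhoA (m : Fin 3 → Fin 3 → Fin 3 → ℂ) : Matrix (Fin 3) (Fin 3) ℂ :=
  fun a a' => ∑ j : Fin 3, ∑ k : Fin 3, m a j k * (starRingEnd ℂ) (m a' j k)

/-- Reduced density matrix of mode B (trace out A and C). -/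
noncomputable def rhoB (m : Fin 3 → Fin 3 → Fin 3 → ℂ) : Matrix (Fin 3) (Fin 3) ℂ :=
  fun b b' => ∑ i : Fin 3, ∑ k : Fin 3, m i b k * (starRingEnd ℂ) (m i b' k)

/-- Reduced density matrix of mode C (trace out A and B). -/
noncomputable def rhoC (m : Fin 3 → Fin 3 → Fin 3 → ℂ) : Matrix (Fin 3) (Fin 3) ℂ :=
  fun c c' => ∑ i : Fin 3, ∑ j : Fin 3, m i j c * (starRingEnd ℂ) (m i j c')

/-- `|ψ₁⟩ = (1/√6)(|↑↑0⟩+|↓↓0⟩+|↓0↓⟩+|↑0↑⟩+|0↓↓⟩+|0↑↑⟩)`, with `↑ = 0`, `↓ = 1`, empty `= 2`. -/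
noncomputable def psi1 : Fin 3 → Fin 3 → Fin 3 → ℂ := fun i j k =>
  if (i, j, k) = (0, 0, 2) ∨ (i, j, k) = (1, 1, 2) ∨ (i, j, k) = (1, 2, 1) ∨
     (i, j, k) = (0, 2, 0) ∨ (i, j, k) = (2, 1, 1) ∨ (i, j, k) = (2, 0, 0) then
    ((Real.sqrt 6 : ℝ) : ℂ)⁻¹ else 0

theorem stmt_9 :
    rhoA psi1 = ((3 : ℂ)⁻¹) • (1 : Matrix (Fin 3) (Fin 3) ℂ) ∧
    rhoB psi1 = ((3 : ℂ)⁻¹) • (1 : Matrix (Fin 3) (Fin 3) ℂ) ∧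
    rhoC psi1 = ((3 : ℂ)⁻¹) • (1 : Matrix (Fin 3) (Fin 3) ℂ) := by
  have h : (((Real.sqrt 6 : ℝ) : ℂ))⁻¹ * (((Real.sqrt 6 : ℝ) : ℂ))⁻¹ = 1/6 := by
    rw [← mul_inv, ← Complex.ofReal_mul, Real.mul_self_sqrt (by norm_num)]
    norm_num
  refine ⟨?_, ?_, ?_⟩ <;>
  · funext a a'
    fin_cases a <;> fin_cases a' <;>
      simp [rhoA, rhoB, rhoC, psi1, Fin.sum_univ_three, Matrix.one_apply,
        Matrix.smul_apply, Prod.ext_iff, h] <;> norm_num [h]
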